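/- Let n ≥ 1, let A be a Γ-invariant bivariate copula, and let μ be a probability measure on [0,1]² whose distribution function is A. If μ((1/(n+1), n/(n+1)] × (1/(n+1), n/(n+1)]) > 0, then (1/n)Σ_{k=1}^n A(k/(n+1), k/(n+1)) > 1/4. -/

import Mathlib

open MeasureTheory Set

/-- A bivariate copula on [0,1]², encoded as a function `ℝ → ℝ → ℝ` whose
defining properties are required on the unit square. -/
def IsCopula (C : ℝ → ℝ → ℝ) : Prop :=
  (∀ u ∈ Icc (0:ℝ) 1, C u 0 = 0) ∧
  (∀ v ∈ Icc (0:ℝ) 1, C 0 v = 0) ∧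
  (∀ u ∈ Icc (0:ℝ) 1, C u 1 = u) ∧
  (∀ v ∈ Icc (0:ℝ) 1, C 1 v = v) ∧
  (∀ u₁ u₂ v₁ v₂ : ℝ, u₁ ∈ Icc (0:ℝ) 1 → u₂ ∈ Icc (0:ℝ) 1 → v₁ ∈ Icc (0:ℝ) 1 →
    v₂ ∈ Icc (0:ℝ) 1 → u₁ ≤ u₂ → v₁ ≤ v₂ →
    0 ≤ C u₂ v₂ - C u₂ v₁ - C u₁ v₂ + C u₁ v₁) ∧
  (∀ u ∈ Icc (0:ℝ) 1, ∀ v ∈ Icc (0:ℝ) 1, C u v ∈ Icc (0:ℝ) 1)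

/-- Γ-invariance of a bivariate copula: invariance under the transposition and
the partial reflection ν₁. -/
def IsGammaInvariant (C : ℝ → ℝ → ℝ) : Prop :=
  ∀ u ∈ Icc (0:ℝ) 1, ∀ v ∈ Icc (0:ℝ) 1,
    C u v = C v u ∧ C u v = v - C (1 - u) v

/-- The unit square in ℝ². -/
def unitSquare : Set (ℝ × ℝ) := Icc (0:ℝ) 1 ×ˢ Icc (0:ℝ) 1

/-- `μ` is a measure on [0,1]² whose distribution function is `A`. -/
def IsDistributionOf (μ : Measure (ℝ × ℝ)) (A : ℝ → ℝ → ℝ) : Prop :=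
  ∀ u ∈ Icc (0:ℝ) 1, ∀ v ∈ Icc (0:ℝ) 1,
    μ (Icc (0:ℝ) u ×ˢ Icc (0:ℝ) v) = ENNReal.ofReal (A u v)

/-- The biconvex form `[C, A]` where `μ` is the measure associated with `A`. -/
noncomputable def biForm (μ : Measure (ℝ × ℝ)) (C : ℝ → ℝ → ℝ) : ℝ :=
  ∫ p in unitSquare, C p.1 p.2 ∂μ

/-!
Γ-invariance expresses `A (1-u) u` and `A (1-u) (1-u)` through `A u u`, and then the mass of the
square `(u, 1-u]²` becomes `1 - 4u + 4 A(u,u)`. Its nonnegativity for `u ≤ 1/2` gives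
`A(u,u) ≥ u - 1/4`, on all of `[0,1]` by the same reflection, strictly at `u = 1/(n+1)` when
that square carries mass. The grid points `k/(n+1)` have mean `1/2`, so the mean of `A(u,u)`
over them exceeds `1/2 - 1/4`.
-/

def squareVolume (C : ℝ → ℝ → ℝ) (a b : ℝ) : ℝ := C b b - C a b - C b a + C a a

namespace IsCopula

variable {C : ℝ → ℝ → ℝ}

theorem squareVolume_nonneg (hC : IsCopula C) {a b : ℝ} (ha : a ∈ Icc (0:ℝ) 1)
    (hb : b ∈ Icc (0:ℝ) 1) (hab : a ≤ b) : 0 ≤ squareVolume C a b := by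
  have := hC.2.2.2.2.1 a b a b ha hb ha hb hab hab
  unfold squareVolume
  linarith

end IsCopula

namespace IsGammaInvariant

variable {C : ℝ → ℝ → ℝ} {u : ℝ}

theorem apply_one_sub_self (hC : IsGammaInvariant C) (hu : u ∈ Icc (0:ℝ) 1) :
    C (1 - u) u = u - C u u := by
  have := (hC (1 - u) (Icc.one_sub_mem hu) u hu).2
  rw [sub_sub_cancel] at this
  linarith

theorem diag_one_sub (hC : IsGammaInvariant C) (hu : u ∈ Icc (0:ℝ) 1) :
    C (1 - u) (1 - u) = 1 - 2 * u + C u u := by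
  have hu' := Icc.one_sub_mem hu
  have reflect := (hC (1 - u) hu' (1 - u) hu').2
  have symm := (hC u hu (1 - u) hu').1
  rw [sub_sub_cancel] at reflect
  linarith [hC.apply_one_sub_self hu]

theorem squareVolume_one_sub (hC : IsGammaInvariant C) (hu : u ∈ Icc (0:ℝ) 1) :
    squareVolume C u (1 - u) = 1 - 4 * u + 4 * C u u := by
  have symm := (hC u hu (1 - u) (Icc.one_sub_mem hu)).1
  unfold squareVolume
  linarith [hC.diag_one_sub hu, hC.apply_one_sub_self hu]

end IsGammaInvariant

theorem IsCopula.sub_quarter_le_diag {C : ℝ → ℝ → ℝ} (hC : IsCopula C)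
    (hΓ : IsGammaInvariant C) {u : ℝ} (hu : u ∈ Icc (0:ℝ) 1) : u - 1 / 4 ≤ C u u := by
  have half_case : ∀ w ∈ Icc (0:ℝ) 1, w ≤ 1 / 2 → w - 1 / 4 ≤ C w w := fun w hw hw2 => by
    have := hC.squareVolume_nonneg hw (Icc.one_sub_mem hw) (by linarith)
    linarith [hΓ.squareVolume_one_sub hw]
  rcases le_or_gt u (1 / 2) with hu2 | hu2
  · exact half_case u hu hu2
  · have := half_case (1 - u) (Icc.one_sub_mem hu) (by linarith)
    linarith [hΓ.diag_one_sub hu]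

section Rectangles

variable {μ : Measure (ℝ × ℝ)} [IsFiniteMeasure μ]

theorem measureReal_Icc_prod_eq_add {a b : ℝ} (ha : 0 ≤ a) (hab : a ≤ b) {t : Set ℝ}
    (ht : MeasurableSet t) :
    μ.real (Icc 0 b ×ˢ t) = μ.real (Icc 0 a ×ˢ t) + μ.real (Ioc a b ×ˢ t) := by
  rw [← Icc_union_Ioc_eq_Icc ha hab, union_prod]
  refine measureReal_union (disjoint_prod.2 (Or.inl ?_)) (measurableSet_Ioc.prod ht)
  exact (Iic_disjoint_Ioc le_rfl).mono_left Icc_subset_Iic_self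

theorem measureReal_prod_Icc_eq_add {s : Set ℝ} (hs : MeasurableSet s) {c d : ℝ} (hc : 0 ≤ c)
    (hcd : c ≤ d) :
    μ.real (s ×ˢ Icc 0 d) = μ.real (s ×ˢ Icc 0 c) + μ.real (s ×ˢ Ioc c d) := by
  rw [← Icc_union_Ioc_eq_Icc hc hcd, prod_union]
  refine measureReal_union (disjoint_prod.2 (Or.inr ?_)) (hs.prod measurableSet_Ioc)
  exact (Iic_disjoint_Ioc le_rfl).mono_left Icc_subset_Iic_self

theorem measureReal_Ioc_prod_Ioc {a b c d : ℝ} (ha : 0 ≤ a) (hab : a ≤ b) (hc : 0 ≤ c)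
    (hcd : c ≤ d) :
    μ.real (Ioc a b ×ˢ Ioc c d) = μ.real (Icc 0 b ×ˢ Icc 0 d) - μ.real (Icc 0 a ×ˢ Icc 0 d)
      - μ.real (Icc 0 b ×ˢ Icc 0 c) + μ.real (Icc 0 a ×ˢ Icc 0 c) := by
  have top := measureReal_Icc_prod_eq_add (μ := μ) ha hab (measurableSet_Icc (a := 0) (b := d))
  have bottom := measureReal_Icc_prod_eq_add (μ := μ) ha hab (measurableSet_Icc (a := 0) (b := c))
  have strip := measureReal_prod_Icc_eq_add (μ := μ) (measurableSet_Ioc (a := a) (b := b)) hc hcd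
  linarith

theorem IsDistributionOf.measureReal_Ioc_prod_Ioc {A : ℝ → ℝ → ℝ} (hμ : IsDistributionOf μ A)
    (hA : IsCopula A) {a b : ℝ} (ha : a ∈ Icc (0:ℝ) 1) (hb : b ∈ Icc (0:ℝ) 1) (hab : a ≤ b) :
    μ.real (Ioc a b ×ˢ Ioc a b) = squareVolume A a b := by
  have cdf : ∀ u ∈ Icc (0:ℝ) 1, ∀ v ∈ Icc (0:ℝ) 1, μ.real (Icc 0 u ×ˢ Icc 0 v) = A u v :=
    fun u hu v hv => by
      rw [measureReal_def, hμ u hu v hv, ENNReal.toReal_ofReal (hA.2.2.2.2.2 u hu v hv).1]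
  rw [_root_.measureReal_Ioc_prod_Ioc ha.1 hab ha.1 hab, cdf b hb b hb, cdf a ha b hb,
    cdf b hb a ha, cdf a ha a ha, squareVolume]

end Rectangles

theorem sum_fin_add_one_div (n : ℕ) :
    ∑ k : Fin n, ((k : ℝ) + 1) / ((n : ℝ) + 1) = n / 2 := by
  have gauss : ∀ m : ℕ, ∑ k ∈ Finset.range m, ((k : ℝ) + 1) = m * (m + 1) / 2 := by
    intro m
    induction m with
    | zero => simp
    | succ m ih => rw [Finset.sum_range_succ, ih]; push_cast; ring
  rw [Fin.sum_univ_eq_sum_range (fun k => ((k : ℝ) + 1) / ((n : ℝ) + 1)), ← Finset.sum_div, gauss]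
  field_simp

theorem stmt15_general (n : ℕ) (A : ℝ → ℝ → ℝ) (hA : IsCopula A)
    (hinv : IsGammaInvariant A)
    (μ : MeasureTheory.Measure (ℝ × ℝ))
    (hμ : MeasureTheory.IsProbabilityMeasure μ) (hdist : IsDistributionOf μ A)
    (hpos : 0 < μ (Ioc ((1:ℝ)/((n:ℝ)+1)) ((n:ℝ)/((n:ℝ)+1)) ×ˢ
        Ioc ((1:ℝ)/((n:ℝ)+1)) ((n:ℝ)/((n:ℝ)+1)))) :
    (1/(n:ℝ)) * (∑ k : Fin n,
      A (((k.val:ℝ)+1)/((n:ℝ)+1)) (((k.val:ℝ)+1)/((n:ℝ)+1))) > 1/4 := by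
  set a : ℝ := 1 / ((n : ℝ) + 1) with ha_def
  have hn1 : (0 : ℝ) < n + 1 := by positivity
  have hb : (n : ℝ) / (n + 1) = 1 - a := by rw [ha_def]; field_simp; ring
  rw [hb] at hpos
  have hab : a < 1 - a := nonempty_Ioc.1 (nonempty_of_measure_ne_zero hpos.ne').fst
  have hn : 1 < n := by
    rw [← hb, ha_def, div_lt_div_iff_of_pos_right hn1] at hab
    exact_mod_cast hab
  have hu : ∀ k : Fin n, ((k : ℝ) + 1) / (n + 1) ∈ Icc (0:ℝ) 1 := fun k =>
    ⟨by positivity, (div_le_one hn1).2 (by simp [k.isLt.le])⟩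
  have ha : a ∈ Icc (0:ℝ) 1 := by simpa [ha_def] using hu ⟨0, by omega⟩
  have h_strict : a - 1 / 4 < A a a := by
    have hvol := hdist.measureReal_Ioc_prod_Ioc hA ha (Icc.one_sub_mem ha) hab.le
    rw [hinv.squareVolume_one_sub ha] at hvol
    have hmass : 0 < μ.real (Ioc a (1 - a) ×ˢ Ioc a (1 - a)) :=
      ENNReal.toReal_pos hpos.ne' (measure_ne_top μ _)
    linarith
  have h_sum : ∑ k : Fin n, (((k : ℝ) + 1) / (n + 1) - 1 / 4)
      < ∑ k : Fin n, A (((k : ℝ) + 1) / (n + 1)) (((k : ℝ) + 1) / (n + 1)) :=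
    Finset.sum_lt_sum (fun k _ => hA.sub_quarter_le_diag hinv (hu k))
      ⟨⟨0, by omega⟩, Finset.mem_univ _, by simpa [ha_def] using h_strict⟩
  rw [Finset.sum_sub_distrib, sum_fin_add_one_div] at h_sum
  simp only [Finset.sum_const, Finset.card_univ, Fintype.card_fin, nsmul_eq_mul] at h_sum
  have hn0 : (0 : ℝ) < n := by positivity
  rw [gt_iff_lt, one_div_mul_eq_div, lt_div_iff₀ hn0]
  linarith

theorem stmt15 (n : ℕ) (hn : 1 ≤ n) (A : ℝ → ℝ → ℝ) (hA : IsCopula A)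
    (hinv : IsGammaInvariant A)
    (μ : MeasureTheory.Measure (ℝ × ℝ))
    (hμ : MeasureTheory.IsProbabilityMeasure μ) (hdist : IsDistributionOf μ A)
    (hpos : 0 < μ (Ioc ((1:ℝ)/((n:ℝ)+1)) ((n:ℝ)/((n:ℝ)+1)) ×ˢ
        Ioc ((1:ℝ)/((n:ℝ)+1)) ((n:ℝ)/((n:ℝ)+1)))) :
    (1/(n:ℝ)) * (∑ k : Fin n,
      A (((k.val:ℝ)+1)/((n:ℝ)+1)) (((k.val:ℝ)+1)/((n:ℝ)+1))) > 1/4 :=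
  stmt15_general n A hA hinv μ hμ hdist hpos
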